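/- Let G = (V, E) be a finite simple graph, let m ≥ k ≥ 1 be integers, let T ⊆ V be an m-dominating set of G, and let S ⊆ V ∖ T. Let G_r be obtained from G by adding a new node r joined by edges exactly to a subset R ⊆ T with |R| = k, and let H_r be the subgraph of G_r induced by T ∪ S ∪ {r}. If H_r is k-(T, r)-connected, then H_r is k-in-connected to r, i.e., for every v ∈ T ∪ S there are k internally-disjoint v–r paths in H_r. -/

import Mathlib

open SimpleGraph

/-- `HasIDPaths G u v k` : the graph `G` contains `k` pairwise internally disjoint
`u`-`v` paths, i.e. `k` distinct paths sharing no vertices other than `u` and `v`. -/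
def HasIDPaths {V : Type*} (G : SimpleGraph V) (u v : V) (k : ℕ) : Prop :=
  ∃ P : Fin k → G.Path u v, Function.Injective P ∧
    ∀ i j, i ≠ j → ∀ w, w ∈ (P i).val.support → w ∈ (P j).val.support → w = u ∨ w = v

/-- `KConnected G k` : `G` has `k` internally disjoint paths between every pair of nodes. -/
def KConnected {V : Type*} (G : SimpleGraph V) (k : ℕ) : Prop :=
  ∀ u v : V, u ≠ v → HasIDPaths G u v k

/-!
Let `v ∈ S`, so `v ∉ T` and `v` is not adjacent to the root `r`. If a set `C` of fewer than `k`
nodes other than `v` and `r` met every `v`–`r` path, then one of the at least `m ≥ k` neighbours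
`t ∈ T` of `v` would lie outside `C`, and one of the `k` internally disjoint `t`–`r` paths would
miss `C`; preceded by `v`, it is a `v`–`r` walk missing `C`. Menger's theorem, applied to the
neighbourhoods of `v` and `r` in the graph without the edges at `v` and `r`, then gives `k`
internally disjoint `v`–`r` paths.

Menger's theorem is proved by induction on the number of edges. If deleting an edge `xy` leaves
no `A`–`B` separator with fewer than `k` vertices, induct. Otherwise such a separator `S` of
`G - xy` is missed by an `A`–`B` walk of `G`, which crosses `xy` from an end `a` reachable from
`A` to an end `b` reachable from `B` (both avoiding `S`). Then every separator between `A` and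
`S ∪ {a}` in `G - xy` separates `A` from `B` in `G`, and likewise for `B` and `S ∪ {b}`; so by
induction `G - xy` has `k` disjoint paths from `A` to `S ∪ {a}` and `k` from `B` to `S ∪ {b}`.
Cut at their first vertex in the target set, paths of the two systems can only meet in a common
end in `S`, so they glue to `k` disjoint `A`–`B` paths, the one ending at `a` continuing along
`xy`.
-/

namespace SimpleGraph

variable {W : Type*} {G H : SimpleGraph W} {A B S X Z : Set W} {k : ℕ}

def Separates (G : SimpleGraph W) (A B C : Set W) : Prop :=
  ∀ ⦃a b : W⦄, a ∈ A → b ∈ B → ∀ p : G.Walk a b, ∃ c ∈ C, c ∈ p.support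

structure DisjointPaths (G : SimpleGraph W) (A B : Set W) (k : ℕ) where
  src : Fin k → W
  tgt : Fin k → W
  walk : ∀ i, G.Walk (src i) (tgt i)
  src_mem : ∀ i, src i ∈ A
  tgt_mem : ∀ i, tgt i ∈ B
  isPath : ∀ i, (walk i).IsPath
  pairwise_disjoint : Pairwise fun i j => (walk i).support.Disjoint (walk j).support

theorem Separates.symm (h : G.Separates A B S) : G.Separates B A S := fun _ _ hb ha p => by
  simpa using h ha hb p.reverse

theorem Separates.self_right (G : SimpleGraph W) (A X : Set W) : G.Separates A X X :=
  fun _ _ _ hb p => ⟨_, hb, p.end_mem_support⟩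

namespace Walk

theorem exists_prefix_firstHit {a b : W} (p : G.Walk a b) (h : ∃ x ∈ X, x ∈ p.support) :
    ∃ w ∈ X, ∃ q : G.Walk a w, q.IsPath ∧ q.support ⊆ p.support ∧
      ∀ z ∈ q.support, z ∈ X → z = w := by
  classical
  suffices ∃ w ∈ X, ∃ q : G.Walk a w, q.support ⊆ p.support ∧
      ∀ z ∈ q.support, z ∈ X → z = w by
    obtain ⟨w, hw, q, hsub, hX⟩ := this
    exact ⟨w, hw, q.bypass, q.bypass_isPath, List.Subset.trans q.support_bypass_subset_support hsub,
      fun z hz => hX z (q.support_bypass_subset_support hz)⟩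
  induction p with
  | nil =>
    obtain ⟨x, hx, hmem⟩ := h
    rw [support_nil, List.mem_singleton] at hmem
    subst hmem
    exact ⟨x, hx, nil, by simp, by simp⟩
  | @cons u _ _ hadj p ih =>
    by_cases hu : u ∈ X
    · exact ⟨u, hu, nil, by simp, by simp⟩
    · obtain ⟨x, hx, hmem⟩ := h
      have hmem' : x ∈ p.support := by
        rw [support_cons, List.mem_cons] at hmem
        exact hmem.resolve_left (by rintro rfl; exact hu hx)
      obtain ⟨w, hw, q, hsub, hX⟩ := ih ⟨x, hx, hmem'⟩
      refine ⟨w, hw, cons hadj q, ?_, ?_⟩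
      · rw [support_cons, support_cons]
        exact List.cons_subset_cons _ hsub
      · intro z hz hzX
        rw [support_cons, List.mem_cons] at hz
        rcases hz with rfl | hz
        exacts [absurd hzX hu, hX z hz hzX]

theorem notMem_edges_of_firstHit {a w x y : W} {q : G.Walk a w}
    (hq : ∀ z ∈ q.support, z ∈ X → z = w) (hx : x ∈ X) (hy : y ∈ X) : s(x, y) ∉ q.edges := by
  intro he
  have hxy : x = y := (hq x (q.fst_mem_support_of_mem_edges he) hx).trans
    (hq y (q.snd_mem_support_of_mem_edges he) hy).symm
  subst hxy
  exact G.loopless.irrefl x (q.edges_subset_edgeSet he)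

theorem IsPath.eq_of_end_mem_support_takeUntil [DecidableEq W] {a y u : W} {P : G.Walk a y}
    (hP : P.IsPath) (h : u ∈ P.support) (hy : y ∈ (P.takeUntil u h).support) : u = y := by
  by_contra hne
  have hnd := hP.support_nodup
  rw [← P.take_spec h, support_append] at hnd
  have hy' : y ∈ (P.dropUntil u h).support.tail := by
    have := (P.dropUntil u h).end_mem_support
    rw [← (P.dropUntil u h).cons_tail_support, List.mem_cons] at this
    exact this.resolve_left (Ne.symm hne)
  exact List.disjoint_of_nodup_append hnd hy hy'

theorem ne_of_mem_support_deleteEdges {s r a b : W}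
    (p : (G.deleteEdges {e | s ∈ e ∨ r ∈ e}).Walk a b) (hs : a ≠ s) (hr : a ≠ r) :
    ∀ z ∈ p.support, z ≠ s ∧ z ≠ r := by
  induction p with
  | nil => simpa using ⟨hs, hr⟩
  | cons h p ih =>
    have hD := (deleteEdges_adj.mp h).2
    simp only [Set.mem_ofPred_eq, Sym2.mem_iff, not_or] at hD
    simp only [support_cons, List.mem_cons, forall_eq_or_imp]
    exact ⟨⟨hs, hr⟩, ih (Ne.symm hD.1.2) (Ne.symm hD.2.2)⟩

theorem exists_interior {s r : W} (p : G.Walk s r) (hp : p.IsPath) (hsr : s ≠ r)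
    (hadj : ¬ G.Adj s r) : ∃ a ∈ G.neighborSet s, ∃ b ∈ G.neighborSet r,
      ∃ q : (G.deleteEdges {e | s ∈ e ∨ r ∈ e}).Walk a b, q.support ⊆ p.support := by
  obtain ⟨a, hsa, p₁, rfl⟩ := not_nil_iff.mp (p.not_nil_of_ne hsr)
  have har : a ≠ r := by rintro rfl; exact hadj hsa
  obtain ⟨b, hrb, p₂, hp₂⟩ := not_nil_iff.mp (p₁.reverse.not_nil_of_ne har.symm)
  rw [cons_isPath_iff] at hp
  have hrp₂ : r ∉ p₂.support := by
    have := hp.1.reverse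
    rw [hp₂, cons_isPath_iff] at this
    exact this.2
  have hsub : p₂.reverse.support ⊆ p₁.support := fun z hz => by
    have : z ∈ p₁.reverse.support := by
      rw [hp₂, support_cons]
      exact List.mem_cons_of_mem _ (by simpa using hz)
    simpa using this
  have hsr' : ∀ z ∈ p₂.reverse.support, z ≠ s ∧ z ≠ r := fun z hz =>
    ⟨fun h => hp.2 (h ▸ hsub hz), fun h => hrp₂ (by simpa [h] using hz)⟩
  refine ⟨a, hsa, b, hrb, p₂.reverse.toDeleteEdges _ fun e he hD => ?_,
    fun z hz => ?_⟩
  · induction e using Sym2.ind with | _ x y => ?_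
    have hx := hsr' x (p₂.reverse.fst_mem_support_of_mem_edges he)
    have hy := hsr' y (p₂.reverse.snd_mem_support_of_mem_edges he)
    simp only [Set.mem_ofPred_eq, Sym2.mem_iff] at hD
    rcases hD with (rfl | rfl) | (rfl | rfl) <;> simp_all
  · rw [support_transfer] at hz
    exact List.mem_cons_of_mem _ (hsub hz)

end Walk

theorem Separates.eq_endpoints_of_mem_support (hS : G.Separates A B S) {a b y z u : W}
    (ha : a ∈ A) (hb : b ∈ B) {P : G.Walk a y} {Q : G.Walk b z} (hP : P.IsPath) (hQ : Q.IsPath)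
    (hPS : ∀ w ∈ P.support, w ∈ S → w = y) (hQS : ∀ w ∈ Q.support, w ∈ S → w = z)
    (huP : u ∈ P.support) (huQ : u ∈ Q.support) : u ∈ S ∧ u = y ∧ u = z := by
  classical
  obtain ⟨c, hcS, hc⟩ := hS ha hb ((P.takeUntil u huP).append (Q.takeUntil u huQ).reverse)
  have hcu : c = u := by
    rw [Walk.mem_support_append_iff, Walk.support_reverse, List.mem_reverse] at hc
    rcases hc with hc | hc
    · obtain rfl := hPS c (P.support_takeUntil_subset_support huP hc) hcS
      exact (hP.eq_of_end_mem_support_takeUntil huP hc).symm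
    · obtain rfl := hQS c (Q.support_takeUntil_subset_support huQ hc) hcS
      exact (hQ.eq_of_end_mem_support_takeUntil huQ hc).symm
  subst hcu
  exact ⟨hcS, hPS c huP hcS, hQS c huQ hcS⟩

namespace DisjointPaths

def mapLe (P : G.DisjointPaths A B k) (h : G ≤ H) : H.DisjointPaths A B k where
  src := P.src
  tgt := P.tgt
  walk i := (P.walk i).mapLe h
  src_mem := P.src_mem
  tgt_mem := P.tgt_mem
  isPath i := (P.isPath i).mapLe h
  pairwise_disjoint i j hij := by
    simpa only [Walk.support_mapLe_eq_support] using P.pairwise_disjoint hij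

def comp {l : ℕ} (P : G.DisjointPaths A B k) (σ : Fin l ↪ Fin k) : G.DisjointPaths A B l where
  src := P.src ∘ σ
  tgt := P.tgt ∘ σ
  walk i := P.walk (σ i)
  src_mem i := P.src_mem (σ i)
  tgt_mem i := P.tgt_mem (σ i)
  isPath i := P.isPath (σ i)
  pairwise_disjoint _ _ hij := P.pairwise_disjoint (σ.injective.ne hij)

theorem tgt_injective (P : G.DisjointPaths A B k) : Function.Injective P.tgt := by
  intro i j h
  by_contra hij
  have hj : P.tgt i ∈ (P.walk j).support := by rw [h]; exact (P.walk j).end_mem_support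
  exact P.pairwise_disjoint hij (P.walk i).end_mem_support hj

theorem exists_tgt_eq [Finite W] (P : G.DisjointPaths A B k) (hB : B.ncard ≤ k) :
    ∀ w ∈ B, ∃ i, P.tgt i = w := by
  have hrange : Set.range P.tgt = B := by
    refine Set.eq_of_subset_of_ncard_le (Set.range_subset_iff.mpr P.tgt_mem) ?_ B.toFinite
    rwa [Set.ncard_range_of_injective P.tgt_injective, Nat.card_fin]
  intro w hw
  rw [← hrange] at hw
  exact hw

theorem exists_embedding_tgt_match [Finite W] {a b : W} {P : G.DisjointPaths A (insert a S) k}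
    {Q : H.DisjointPaths B (insert b S) k} (hbS : b ∉ S) (hk : (insert b S).ncard ≤ k) :
    ∃ σ : Fin k ↪ Fin k, ∀ i, (P.tgt i = a ∧ Q.tgt (σ i) = b) ∨
      (P.tgt i ∈ S ∧ Q.tgt (σ i) = P.tgt i) := by
  have hmatch : ∀ i, ∃ j, (P.tgt i = a ∧ Q.tgt j = b) ∨ (P.tgt i ∈ S ∧ Q.tgt j = P.tgt i) := by
    intro i
    rcases P.tgt_mem i with h | h
    · obtain ⟨j, hj⟩ := Q.exists_tgt_eq hk b (Set.mem_insert b S)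
      exact ⟨j, .inl ⟨h, hj⟩⟩
    · obtain ⟨j, hj⟩ := Q.exists_tgt_eq hk _ (Set.mem_insert_of_mem b h)
      exact ⟨j, .inr ⟨h, hj⟩⟩
  choose σ hσ using hmatch
  refine ⟨⟨σ, fun i j hij => P.tgt_injective ?_⟩, hσ⟩
  have h := congrArg Q.tgt hij
  rcases hσ i with ⟨hi, hi'⟩ | ⟨hi, hi'⟩ <;> rcases hσ j with ⟨hj, hj'⟩ | ⟨hj, hj'⟩
  · exact hi.trans hj.symm
  · exact absurd (by rwa [← hi', h, hj']) hbS
  · exact absurd (by rwa [← hj', ← h, hi']) hbS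
  · exact hi'.symm.trans (h.trans hj')

theorem exists_firstHit (P : G.DisjointPaths A X k) :
    ∃ Q : G.DisjointPaths A X k, ∀ i, ∀ z ∈ (Q.walk i).support, z ∈ X → z = Q.tgt i := by
  choose y hy Q hQ hsub hX using fun i =>
    (P.walk i).exists_prefix_firstHit ⟨_, P.tgt_mem i, (P.walk i).end_mem_support⟩
  exact ⟨⟨P.src, y, Q, P.src_mem, hy, hQ,
    fun i j hij => List.disjoint_of_subset_left (hsub i)
      (List.disjoint_of_subset_right (hsub j) (P.pairwise_disjoint hij))⟩, hX⟩

theorem nonempty_of_edgeSet_eq_empty [Finite W] (hE : G.edgeSet = ∅)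
    (hsep : ∀ C, G.Separates A B C → k ≤ C.ncard) : Nonempty (G.DisjointPaths A B k) := by
  have hAB : G.Separates A B (A ∩ B) := by
    intro a b ha hb p
    cases p with
    | nil => exact ⟨a, ⟨ha, hb⟩, List.mem_singleton_self a⟩
    | cons h _ => exact absurd (G.mem_edgeSet.mpr h) (hE ▸ Set.notMem_empty _)
  obtain ⟨t, ht, htk⟩ := Set.exists_subset_card_eq (hsep _ hAB)
  let e : t ≃ Fin k := Finite.equivFinOfCardEq (by rwa [Nat.card_coe_set_eq])
  refine ⟨⟨fun i => e.symm i, fun i => e.symm i, fun _ => Walk.nil,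
    fun i => (ht (e.symm i).2).1, fun i => (ht (e.symm i).2).2, fun _ => Walk.IsPath.nil, ?_⟩⟩
  intro i j hij z hi hj
  rw [Walk.support_nil, List.mem_singleton] at hi hj
  exact hij (e.symm.injective (Subtype.ext (hi.symm.trans hj)))

theorem glue {Y : Set W} {P : G.DisjointPaths A X k} {Q : G.DisjointPaths B Y k}
    (hPQ : ∀ i, P.tgt i = Q.tgt i ∨ G.Adj (P.tgt i) (Q.tgt i))
    (hdisj : Pairwise fun i j => (P.walk i).support.Disjoint (Q.walk j).support) :
    Nonempty (G.DisjointPaths A B k) := by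
  classical
  have hjoin : ∀ i, ∃ R : G.Walk (P.src i) (Q.src i),
      R.support ⊆ (P.walk i).support ++ (Q.walk i).support := by
    intro i
    rcases hPQ i with h | h
    · refine ⟨(P.walk i).append ((Q.walk i).reverse.copy h.symm rfl), fun z hz => ?_⟩
      simp only [Walk.mem_support_append_iff, Walk.support_copy, Walk.support_reverse,
        List.mem_reverse] at hz
      exact List.mem_append.mpr hz
    · refine ⟨(P.walk i).append (.cons h (Q.walk i).reverse), fun z hz => ?_⟩
      simp only [Walk.mem_support_append_iff, Walk.support_cons, List.mem_cons,
        Walk.support_reverse, List.mem_reverse] at hz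
      rcases hz with hz | rfl | hz
      exacts [List.mem_append_left _ hz, List.mem_append_left _ (P.walk i).end_mem_support,
        List.mem_append_right _ hz]
  choose R hR using hjoin
  have hsub i : (R i).bypass.support ⊆ (P.walk i).support ++ (Q.walk i).support :=
    List.Subset.trans (R i).support_bypass_subset_support (hR i)
  refine ⟨⟨P.src, Q.src, fun i => (R i).bypass, P.src_mem, Q.src_mem,
    fun i => (R i).bypass_isPath, fun i j hij =>
      List.disjoint_of_subset_left (hsub i) (List.disjoint_of_subset_right (hsub j) ?_)⟩⟩
  simp only [List.disjoint_append_left, List.disjoint_append_right]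
  exact ⟨⟨P.pairwise_disjoint hij, (hdisj hij.symm).symm⟩,
    ⟨hdisj hij, Q.pairwise_disjoint hij⟩⟩

end DisjointPaths

theorem exists_crossing_of_separates_deleteEdges {x y : W}
    (hS' : (G.deleteEdges {s(x, y)}).Separates A B S) (hS : ¬ G.Separates A B S) :
    ∃ a b, G.Adj a b ∧ s(a, b) = s(x, y) ∧
      (∃ a₀ ∈ A, ∃ p : (G.deleteEdges {s(x, y)}).Walk a₀ a, ∀ w ∈ p.support, w ∉ S) ∧
      (∃ b₀ ∈ B, ∃ q : (G.deleteEdges {s(x, y)}).Walk b₀ b, ∀ w ∈ q.support, w ∉ S) := by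
  simp only [Separates, not_forall, not_exists, not_and] at hS
  obtain ⟨a₀, b₀, ha₀, hb₀, p, hp⟩ := hS
  have he : s(x, y) ∈ p.edges := by
    by_contra he
    obtain ⟨c, hc, hcp⟩ := hS' ha₀ hb₀ (p.toDeleteEdge _ he)
    exact hp c hc (by simpa using hcp)
  have hx : x ∈ p.support := p.fst_mem_support_of_mem_edges he
  obtain ⟨a, ha, p₁, -, hsub₁, hX₁⟩ := p.exists_prefix_firstHit (X := {x, y}) ⟨x, by simp, hx⟩
  obtain ⟨b, hb, q₁, -, hsub₂, hX₂⟩ :=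
    p.reverse.exists_prefix_firstHit (X := {x, y}) ⟨x, by simp, by simpa using hx⟩
  set p₁' := p₁.toDeleteEdge s(x, y) (Walk.notMem_edges_of_firstHit hX₁ (by simp) (by simp))
  set q₁' := q₁.toDeleteEdge s(x, y) (Walk.notMem_edges_of_firstHit hX₂ (by simp) (by simp))
  have hp₁' : ∀ w ∈ p₁'.support, w ∉ S := fun w hw hwS => hp w hwS (hsub₁ (by simpa [p₁'] using hw))
  have hq₁' : ∀ w ∈ q₁'.support, w ∉ S := fun w hw hwS =>
    hp w hwS (by simpa using hsub₂ (by simpa [q₁'] using hw))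
  have hab : a ≠ b := by
    rintro rfl
    obtain ⟨c, hc, hcp⟩ := hS' ha₀ hb₀ (p₁'.append q₁'.reverse)
    rw [Walk.mem_support_append_iff, Walk.support_reverse, List.mem_reverse] at hcp
    exact hcp.elim (hp₁' c · hc) (hq₁' c · hc)
  have habxy : s(a, b) = s(x, y) := by
    simp only [Set.mem_insert_iff, Set.mem_singleton_iff] at ha hb
    rcases ha with rfl | rfl <;> rcases hb with rfl | rfl <;> simp_all [Sym2.eq_swap]
  refine ⟨a, b, ?_, habxy, ⟨a₀, ha₀, p₁', hp₁'⟩, ⟨b₀, hb₀, q₁', hq₁'⟩⟩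
  rw [← mem_edgeSet, habxy]
  exact p.edges_subset_edgeSet he

theorem separates_of_separates_deleteEdges_insert {a b b₀ : W} (hH : H = G.deleteEdges {s(a, b)})
    (hS : H.Separates A B S) (hb₀ : b₀ ∈ B) (q : H.Walk b₀ b) (hq : ∀ w ∈ q.support, w ∉ S)
    (hZ : H.Separates A (insert a S) Z) : G.Separates A B Z := by
  subst hH
  intro a₀ b₁ ha₀ hb₁ p
  have hmeet : ∃ w ∈ insert b (insert a S), w ∈ p.support := by
    by_cases he : s(a, b) ∈ p.edges
    · exact ⟨a, by simp, p.fst_mem_support_of_mem_edges he⟩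
    · obtain ⟨c, hc, hcp⟩ := hS ha₀ hb₁ (p.toDeleteEdge _ he)
      exact ⟨c, by simp [hc], by simpa using hcp⟩
  obtain ⟨w, hw, p₁, -, hsub, hX⟩ := p.exists_prefix_firstHit hmeet
  set p₁' := p₁.toDeleteEdge s(a, b) (Walk.notMem_edges_of_firstHit hX (by simp) (by simp))
  by_cases hwa : w ∈ insert a S
  · obtain ⟨c, hc, hcp⟩ := hZ ha₀ hwa p₁'
    exact ⟨c, hc, hsub (by simpa [p₁'] using hcp)⟩
  obtain rfl : w = b := by simpa [hwa] using hw
  obtain ⟨c, hc, hcp⟩ := hS ha₀ hb₀ (p₁'.append q.reverse)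
  rw [Walk.mem_support_append_iff, Walk.support_reverse, List.mem_reverse] at hcp
  refine hcp.elim (fun hcp => ?_) (fun hcp => absurd hc (hq c hcp))
  obtain rfl := hX c (by simpa [p₁'] using hcp) (by simp [hc])
  exact absurd (Set.mem_insert_of_mem a hc) hwa

theorem nonempty_disjointPaths_of_firstHit [Finite W] {a b : W} (hab : G.Adj a b) (hHG : H ≤ G)
    (hS : H.Separates A B S) (hbS : b ∉ S) (hk : (insert b S).ncard ≤ k)
    (P : H.DisjointPaths A (insert a S) k)
    (hP : ∀ i, ∀ z ∈ (P.walk i).support, z ∈ insert a S → z = P.tgt i)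
    (Q : H.DisjointPaths B (insert b S) k)
    (hQ : ∀ j, ∀ z ∈ (Q.walk j).support, z ∈ insert b S → z = Q.tgt j) :
    Nonempty (G.DisjointPaths A B k) := by
  have key : ∀ i j u, u ∈ (P.walk i).support → u ∈ (Q.walk j).support →
      u ∈ S ∧ u = P.tgt i ∧ u = Q.tgt j := fun i j _ =>
    hS.eq_endpoints_of_mem_support (P.src_mem i) (Q.src_mem j) (P.isPath i) (Q.isPath j)
      (fun w hw hwS => hP i w hw (Set.mem_insert_of_mem a hwS))
      (fun w hw hwS => hQ j w hw (Set.mem_insert_of_mem b hwS))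
  obtain ⟨σ, hσ⟩ := DisjointPaths.exists_embedding_tgt_match (P := P) (Q := Q) hbS hk
  refine DisjointPaths.glue (P := P.mapLe hHG) (Q := (Q.comp σ).mapLe hHG)
    (fun i => ?_) (fun i j hij u hui huj => ?_)
  · change P.tgt i = Q.tgt (σ i) ∨ G.Adj (P.tgt i) (Q.tgt (σ i))
    rcases hσ i with ⟨h, h'⟩ | ⟨-, h'⟩
    · rw [h, h']
      exact .inr hab
    · exact .inl h'.symm
  · simp only [DisjointPaths.mapLe, DisjointPaths.comp, Walk.support_mapLe_eq_support] at hui huj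
    obtain ⟨huS, hui, huj⟩ := key i (σ j) u hui huj
    rcases hσ j with ⟨-, h'⟩ | ⟨-, h'⟩
    · exact hbS (h' ▸ huj ▸ huS)
    · exact hij (P.tgt_injective (hui.symm.trans (huj.trans h')))

theorem nonempty_disjointPaths_of_crossing [Finite W] {a b a₀ b₀ : W} (hab : G.Adj a b)
    (hH : H = G.deleteEdges {s(a, b)}) (hsep : ∀ C, G.Separates A B C → k ≤ C.ncard)
    (hS : H.Separates A B S) (hSk : S.ncard < k)
    (ha₀ : a₀ ∈ A) (p : H.Walk a₀ a) (hp : ∀ w ∈ p.support, w ∉ S)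
    (hb₀ : b₀ ∈ B) (q : H.Walk b₀ b) (hq : ∀ w ∈ q.support, w ∉ S)
    (ih : ∀ A' X : Set W, (∀ C, H.Separates A' X C → k ≤ C.ncard) →
      Nonempty (H.DisjointPaths A' X k)) :
    Nonempty (G.DisjointPaths A B k) := by
  have hA : ∀ Z, H.Separates A (insert a S) Z → G.Separates A B Z :=
    fun Z => separates_of_separates_deleteEdges_insert hH hS hb₀ q hq
  have hB : ∀ Z, H.Separates B (insert b S) Z → G.Separates B A Z :=
    fun Z => separates_of_separates_deleteEdges_insert (hH.trans (by rw [Sym2.eq_swap]))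
      hS.symm ha₀ p hp
  have hbS : b ∉ S := fun hb => by
    have := hsep _ (hB _ (.self_right H B _)).symm
    rw [Set.insert_eq_of_mem hb] at this
    omega
  have hk : (insert b S).ncard ≤ k := (Set.ncard_insert_le b S).trans hSk
  obtain ⟨P, hP⟩ := (ih A (insert a S) fun C hC => hsep C (hA C hC)).some.exists_firstHit
  obtain ⟨Q, hQ⟩ := (ih B (insert b S) fun C hC => hsep C (hB C hC).symm).some.exists_firstHit
  exact nonempty_disjointPaths_of_firstHit hab (hH ▸ G.deleteEdges_le _) hS hbS hk P hP Q hQ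

theorem menger [Finite W] (G : SimpleGraph W) (A B : Set W) (k : ℕ)
    (h : ∀ C, G.Separates A B C → k ≤ C.ncard) : Nonempty (G.DisjointPaths A B k) := by
  induction hn : G.edgeSet.ncard using Nat.strong_induction_on generalizing G A B with
  | _ n ih =>
  by_cases hE : G.edgeSet = ∅
  · exact DisjointPaths.nonempty_of_edgeSet_eq_empty hE h
  obtain ⟨e, he⟩ := Set.nonempty_iff_ne_empty.mpr hE
  induction e using Sym2.ind with | _ x y => ?_
  set H := G.deleteEdges {s(x, y)}
  have hlt : H.edgeSet.ncard < n := hn ▸ Set.ncard_lt_ncard (by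
    rw [edgeSet_deleteEdges]
    exact Set.sdiff_singleton_ssubset.mpr he)
  have ihH : ∀ A' B', (∀ C, H.Separates A' B' C → k ≤ C.ncard) →
      Nonempty (H.DisjointPaths A' B' k) := fun A' B' hAB => ih _ hlt H A' B' hAB rfl
  by_cases hH : ∀ C, H.Separates A B C → k ≤ C.ncard
  · exact (ihH A B hH).map (·.mapLe (G.deleteEdges_le _))
  push Not at hH
  obtain ⟨S, hS, hSk⟩ := hH
  obtain ⟨a, b, hab, habxy, ⟨a₀, ha₀, p, hp⟩, ⟨b₀, hb₀, q, hq⟩⟩ :=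
    exists_crossing_of_separates_deleteEdges hS fun hG => (h S hG).not_gt hSk
  exact nonempty_disjointPaths_of_crossing hab (by rw [habxy]) h hS hSk ha₀ p hp hb₀ q hq ihH

theorem le_ncard_of_separates_deleteEdges [Finite W] {s r : W} (hsr : s ≠ r)
    (hadj : ¬ G.Adj s r) (h : ∀ C, s ∉ C → r ∉ C → G.Separates {s} {r} C → k ≤ C.ncard)
    {C : Set W}
    (hC : (G.deleteEdges {e | s ∈ e ∨ r ∈ e}).Separates (G.neighborSet s) (G.neighborSet r) C) :
    k ≤ C.ncard := by
  classical
  refine (h (C \ {s, r}) (by simp) (by simp) ?_).trans (Set.ncard_le_ncard Set.sdiff_subset)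
  rintro _ _ rfl rfl p
  obtain ⟨a, ha, b, hb, q, hq⟩ := p.bypass.exists_interior p.bypass_isPath hsr hadj
  obtain ⟨c, hc, hcq⟩ := hC ha hb q
  obtain ⟨hcs, hcr⟩ :=
    q.ne_of_mem_support_deleteEdges (G.ne_of_adj ha).symm (fun h => hadj (h ▸ ha)) c hcq
  exact ⟨c, ⟨hc, by simp [hcs, hcr]⟩, p.support_bypass_subset_support (hq hcq)⟩

theorem hasIDPaths_of_disjointPaths {s r : W} (hsr : s ≠ r) (hadj : ¬ G.Adj s r)
    (P : (G.deleteEdges {e | s ∈ e ∨ r ∈ e}).DisjointPaths (G.neighborSet s) (G.neighborSet r) k) :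
    HasIDPaths G s r k := by
  have havoid : ∀ i, ∀ z ∈ (P.walk i).support, z ≠ s ∧ z ≠ r := fun i =>
    (P.walk i).ne_of_mem_support_deleteEdges (G.ne_of_adj (P.src_mem i)).symm
      (fun h => hadj (h ▸ P.src_mem i))
  let R i : G.Walk s r :=
    .cons (P.src_mem i) (((P.walk i).mapLe (G.deleteEdges_le _)).concat (P.tgt_mem i).symm)
  have hR : ∀ i, (R i).support = s :: ((P.walk i).support ++ [r]) := fun i => by
    change s :: (((P.walk i).mapLe (G.deleteEdges_le _)).concat (P.tgt_mem i).symm).support = _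
    rw [Walk.support_concat, Walk.support_mapLe_eq_support]
  have hRpath : ∀ i, (R i).IsPath := fun i => by
    rw [Walk.isPath_def, hR, List.nodup_cons, List.mem_append, List.mem_singleton, not_or]
    exact ⟨⟨fun h => (havoid i s h).1 rfl, hsr⟩, (P.isPath i).support_nodup.append
      (List.nodup_singleton r) fun z hz hzr => (havoid i z hz).2 (List.mem_singleton.mp hzr)⟩
  refine ⟨fun i => ⟨R i, hRpath i⟩, fun i j hij => ?_, fun i j hij w hwi hwj => ?_⟩
  · by_contra hne
    have hsrc : P.src i ∈ (R j).support := by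
      rw [show R j = R i from congrArg Subtype.val hij.symm, hR]
      exact List.mem_cons_of_mem _ (List.mem_append_left _ (P.walk i).start_mem_support)
    obtain ⟨hs, hr⟩ := havoid i _ (P.walk i).start_mem_support
    rw [hR, List.mem_cons, List.mem_append, List.mem_singleton] at hsrc
    rcases hsrc with h | h | h
    exacts [hs h, P.pairwise_disjoint hne (P.walk i).start_mem_support h, hr h]
  · by_contra! hw
    simp only [hR, List.mem_cons, List.mem_append, hw, false_or, List.not_mem_nil,
      or_false] at hwi hwj
    exact P.pairwise_disjoint hij hwi hwj

theorem hasIDPaths_of_separates [Finite W] {s r : W} (hsr : s ≠ r) (hadj : ¬ G.Adj s r)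
    (h : ∀ C, s ∉ C → r ∉ C → G.Separates {s} {r} C → k ≤ C.ncard) : HasIDPaths G s r k :=
  hasIDPaths_of_disjointPaths hsr hadj
    (menger _ _ _ k fun _ hC => le_ncard_of_separates_deleteEdges hsr hadj h hC).some

end SimpleGraph

theorem HasIDPaths.exists_walk_avoiding {W : Type*} [Finite W] {G : SimpleGraph W} {u w : W}
    {k : ℕ} (h : HasIDPaths G u w k) {C : Set W} (hC : C.ncard < k) (hu : u ∉ C) (hw : w ∉ C) :
    ∃ p : G.Walk u w, ∀ c ∈ C, c ∉ p.support := by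
  obtain ⟨P, -, hdisj⟩ := h
  by_contra! hmeet
  choose g hgC hgP using fun i => hmeet (P i).val
  have hg : Function.Injective g := fun i j hij => by
    by_contra hne
    rcases hdisj i j hne (g i) (hgP i) (hij ▸ hgP j) with h | h
    exacts [hu (h ▸ hgC i), hw (h ▸ hgC i)]
  have := Set.ncard_le_ncard (Set.range_subset_iff.mpr hgC)
  rw [Set.ncard_range_of_injective hg, Nat.card_fin] at this
  omega

theorem hasIDPaths_of_neighbors {W : Type*} [Finite W] {G : SimpleGraph W} {s r : W} {k : ℕ}
    (hsr : s ≠ r) (hadj : ¬ G.Adj s r) {N : Set W} (hN : N ⊆ G.neighborSet s)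
    (hNk : k ≤ N.ncard) (hNr : ∀ t ∈ N, HasIDPaths G t r k) : HasIDPaths G s r k := by
  refine SimpleGraph.hasIDPaths_of_separates hsr hadj fun C hsC hrC hsep => ?_
  by_contra! hCk
  obtain ⟨t, htN, htC⟩ := Set.exists_mem_notMem_of_ncard_lt_ncard (hCk.trans_le hNk)
  obtain ⟨p, hp⟩ := (hNr t htN).exists_walk_avoiding hCk htC hrC
  have hst : G.Adj s t := hN htN
  obtain ⟨c, hc, hcp⟩ := hsep rfl rfl (.cons hst p)
  rw [SimpleGraph.Walk.support_cons, List.mem_cons] at hcp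
  exact hcp.elim (fun h => hsC (h ▸ hc)) (hp c hc)

theorem kTr_connected_implies_kInConnected_general
    {V : Type*} [Fintype V] (G : SimpleGraph V) (k m : ℕ)
    (hkm : k ≤ m)
    (T S : Set V)
    (hdom : ∀ v : V, v ∉ T → m ≤ (T ∩ G.neighborSet v).ncard)
    (R : Set V) (hRT : R ⊆ T)
    (Hr : SimpleGraph (Option ↥(T ∪ S)))
    (hHrG : ∀ u v : ↥(T ∪ S), Hr.Adj (some u) (some v) ↔ G.Adj (u : V) (v : V))
    (hHrR : ∀ v : ↥(T ∪ S), Hr.Adj none (some v) ↔ (v : V) ∈ R)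
    (hTr : ∀ t : ↥(T ∪ S), (t : V) ∈ T → HasIDPaths Hr (some t) none k) :
    ∀ v : ↥(T ∪ S), HasIDPaths Hr (some v) none k := by
  classical
  intro v
  by_cases hvT : (v : V) ∈ T
  · exact hTr v hvT
  let ι : V → Option ↥(T ∪ S) := fun t => if h : t ∈ T ∪ S then some ⟨t, h⟩ else none
  have hι : ∀ t (ht : t ∈ T), ι t = some ⟨t, Or.inl ht⟩ := fun t ht => dif_pos (Or.inl ht)
  refine hasIDPaths_of_neighbors (Option.some_ne_none v)
    (fun h => hvT (hRT ((hHrR v).mp h.symm))) (N := ι '' (T ∩ G.neighborSet v)) ?_ ?_ ?_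
  · rintro _ ⟨t, ⟨htT, hvt⟩, rfl⟩
    rw [hι t htT]
    exact (hHrG v _).mpr hvt
  · have hinj : Set.InjOn ι (T ∩ G.neighborSet v) := fun t ht t' ht' h => by
      rw [hι t ht.1, hι t' ht'.1, Option.some_inj] at h
      exact congrArg Subtype.val h
    rw [hinj.ncard_image]
    exact hkm.trans (hdom v hvT)
  · rintro _ ⟨t, ⟨htT, -⟩, rfl⟩
    rw [hι t htT]
    exact hTr _ htT

/-- Let `T` be an `m`-dominating set of `G` with `m ≥ k ≥ 1`, `S ⊆ V \ T`, and let `Hr` be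
the subgraph of `G_r` induced by `T ∪ S ∪ {r}`, where `G_r` is obtained from `G` by joining
a new node `r` exactly to a set `R ⊆ T` with `|R| = k` (the new node is modeled by `none`
in `Option ↥(T ∪ S)`). If `Hr` is `k`-`(T,r)`-connected then `Hr` is `k`-in-connected to `r`. -/
theorem kTr_connected_implies_kInConnected
    {V : Type*} [Fintype V] (G : SimpleGraph V) (k m : ℕ)
    (hk : 1 ≤ k) (hkm : k ≤ m)
    (T S : Set V) (hS : S ⊆ Tᶜ)
    (hdom : ∀ v : V, v ∉ T → m ≤ (T ∩ G.neighborSet v).ncard)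
    (R : Set V) (hRT : R ⊆ T) (hRcard : R.ncard = k)
    (Hr : SimpleGraph (Option ↥(T ∪ S)))
    (hHrG : ∀ u v : ↥(T ∪ S), Hr.Adj (some u) (some v) ↔ G.Adj (u : V) (v : V))
    (hHrR : ∀ v : ↥(T ∪ S), Hr.Adj none (some v) ↔ (v : V) ∈ R)
    (hTr : ∀ t : ↥(T ∪ S), (t : V) ∈ T → HasIDPaths Hr (some t) none k) :
    ∀ v : ↥(T ∪ S), HasIDPaths Hr (some v) none k :=
  kTr_connected_implies_kInConnected_general G k m hkm T S hdom R hRT Hr hHrG hHrR hTr
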